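/- Every word of length n over a binary alphabet of the form 0^m 1 0^m 1 0^m contains Θ(m²) distinct abelian square factors; more precisely, the number of distinct factors of 0^m 1 0^m 1 0^m that are abelian squares is at least m²/4. -/

import Mathlib

/-- Abelian equivalence: same number of occurrences of each letter. -/
def abelEq {α : Type*} [DecidableEq α] (u v : List α) : Prop :=
  ∀ a, u.count a = v.count a

/-- An abelian square: a nonempty word of the form `u₁ u₂` with `u₁` and `u₂`
abelian equivalent. -/
def IsAbSquare {α : Type*} [DecidableEq α] (v : List α) : Prop :=
  v ≠ [] ∧ ∃ u₁ u₂ : List α, v = u₁ ++ u₂ ∧ abelEq u₁ u₂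

/-- The word `0^m 1 0^m 1 0^m` over the binary alphabet. -/
def w4 (m : ℕ) : List (Fin 2) :=
  List.replicate m 0 ++ [1] ++ List.replicate m 0 ++ [1] ++ List.replicate m 0

/-!
For `a, c ≤ m` with `a + m + c` even, the factor `0^a 1 0^m 1 0^c` of `0^m 1 0^m 1 0^m` is an
abelian square: cut the middle block of zeros so that both halves hold one `1` and
`(a + m + c) / 2` zeros. Distinct pairs `(a, c)` give distinct factors, and the pairs
`(m - 2i, 2j)` with `i, j ≤ m / 2` already number `(m / 2 + 1)² ≥ m² / 4`.
-/

open List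

section Sandwich

variable {α : Type*}

def sandwich (x y : α) (a m c : ℕ) : List α :=
  replicate a x ++ y :: (replicate m x ++ y :: replicate c x)

theorem replicate_append_cons_inj {x y : α} (hxy : x ≠ y) {a a' : ℕ} {t t' : List α}
    (h : replicate a x ++ y :: t = replicate a' x ++ y :: t') : a = a' ∧ t = t' := by
  induction a generalizing a' with
  | zero =>
    cases a' with
    | zero => simpa using h
    | succ a' => simp [replicate_succ, hxy.symm] at h
  | succ a ih =>
    cases a' with
    | zero => simp [replicate_succ, hxy] at h
    | succ a' =>
      obtain ⟨rfl, rfl⟩ := ih (by simpa [replicate_succ] using h)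
      exact ⟨rfl, rfl⟩

theorem sandwich_inj {x y : α} (hxy : x ≠ y) {m a c a' c' : ℕ}
    (h : sandwich x y a m c = sandwich x y a' m c') : a = a' ∧ c = c' := by
  obtain ⟨ha, h⟩ := replicate_append_cons_inj hxy h
  obtain ⟨-, hc⟩ := replicate_append_cons_inj hxy h
  exact ⟨ha, by simpa using congrArg length hc⟩

theorem sandwich_isInfix (x y : α) (m : ℕ) {a a' c c' : ℕ} (ha : a ≤ a') (hc : c ≤ c') :
    sandwich x y a m c <:+: sandwich x y a' m c' := by
  refine ⟨replicate (a' - a) x, replicate (c' - c) x, ?_⟩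
  simp only [sandwich, ← append_assoc, ← replicate_add, Nat.sub_add_cancel ha]
  simp only [append_assoc, cons_append, ← replicate_add, Nat.add_sub_cancel' hc]

theorem sandwich_isAbSquare [DecidableEq α] (x y : α) {a m c : ℕ} (hac : a ≤ m + c)
    (hca : c ≤ m + a) (heven : Even (a + m + c)) : IsAbSquare (sandwich x y a m c) := by
  obtain ⟨t, ht⟩ := heven
  -- each half gets `t` zeros: the left one takes `t - a` from the middle block
  have hcut : m = (t - a) + (m - (t - a)) := by omega
  refine ⟨by simp [sandwich], replicate a x ++ y :: replicate (t - a) x,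
    replicate (m - (t - a)) x ++ y :: replicate c x, ?_, fun z => ?_⟩
  · rw [sandwich, hcut, replicate_add]
    simp only [append_assoc, cons_append]
    rw [← hcut]
  · simp only [count_append, count_cons, count_replicate, beq_iff_eq]
    split_ifs <;> omega

end Sandwich

theorem List.finite_setOf_isInfix {α : Type*} (l : List α) : {v | v <:+: l}.Finite :=
  l.sublists.finite_toSet.subset fun _ hv => mem_sublists.mpr hv.sublist

theorem w4_eq_sandwich (m : ℕ) : w4 m = sandwich 0 1 m m m := by
  simp [w4, sandwich]

/-- The word `0^m 1 0^m 1 0^m` contains at least `m²/4` distinct abelian-square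
factors (so a word of length `n` can contain `Θ(n²)` distinct abelian squares). -/
theorem stmt4 (m : ℕ) :
    m ^ 2 / 4 ≤ Set.ncard {v : List (Fin 2) | v <:+: w4 m ∧ IsAbSquare v} := by
  set k := m / 2
  let f : ℕ × ℕ → List (Fin 2) := fun p => sandwich 0 1 (m - 2 * p.1) m (2 * p.2)
  have hbound : m ^ 2 / 4 ≤ (k + 1) ^ 2 := by
    have hm : m ≤ 2 * (k + 1) := by omega
    exact Nat.div_le_of_le_mul (by nlinarith)
  have hmaps : ∀ p ∈ Set.Iic k ×ˢ Set.Iic k, f p ∈ {v | v <:+: w4 m ∧ IsAbSquare v} := by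
    rintro ⟨i, j⟩ ⟨hi, hj⟩
    simp only [Set.mem_Iic] at hi hj
    refine ⟨w4_eq_sandwich m ▸ sandwich_isInfix 0 1 m (by omega) (by omega),
      sandwich_isAbSquare 0 1 (by omega) (by omega) ⟨m - i + j, by omega⟩⟩
  have hinj : Set.InjOn f (Set.Iic k ×ˢ Set.Iic k) := by
    rintro ⟨i, j⟩ ⟨hi, -⟩ ⟨i', j'⟩ ⟨hi', -⟩ h
    obtain ⟨h1, h2⟩ := sandwich_inj (by decide) h
    simp only [Set.mem_Iic] at hi hi'
    simp only [Prod.mk.injEq]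
    omega
  calc m ^ 2 / 4 ≤ (k + 1) ^ 2 := hbound
    _ = (Set.Iic k ×ˢ Set.Iic k).ncard := by
      rw [Set.ncard_prod, Set.ncard_eq_toFinset_card', Set.toFinset_Iic, Nat.card_Iic, sq]
    _ ≤ _ := Set.ncard_le_ncard_of_injOn f hmaps hinj
      ((w4 m).finite_setOf_isInfix.subset fun _ hv => hv.1)
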